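/- arXiv:math/0610052 — 2 statements merged into one kernel-verified Lean document; each statement's English description precedes it below -/
import Mathlib

section
/- Let L → L̃ be an arbitrary change of Finsler structures on M, with corresponding Cartan connections ∇ and ∇̃ related by ∇̃_X Ȳ = ∇_X Ȳ + ω(X,Ȳ). Define B(X̄,Ȳ) := ω(βX̄,Ȳ), N(X̄) := B(X̄,η̄), and ℒ := γ∘N∘ρ. Then the corresponding Barthel connections are related by Γ̃ = Γ − 2ℒ, and the horizontal and vertical projectors satisfy h̃ = h − ℒ and ṽ = v + ℒ. -/
/-!
STATEMENT 2.  Under an arbitrary change L → L̃ of Finsler structures on M, with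
Cartan connections related by ∇̃_X Ȳ = ∇_X Ȳ + ω(X,Ȳ), setting B(X̄,Ȳ) := ω(βX̄,Ȳ),
N(X̄) := B(X̄,η̄) and ℒ := γ∘N∘ρ, the Barthel connections satisfy Γ̃ = Γ − 2ℒ and
the projectors satisfy h̃ = h − ℒ, ṽ = v + ℒ  (h = β∘ρ, v = γ∘K, and likewise
for the tilded objects; by Theorem 2.3 the Barthel connection is Γ = β∘ρ − γ∘K).
-/

theorem statement_2
    {U VF PF : Type*}
    [AddCommGroup VF] [Module ℝ VF]
    [AddCommGroup PF] [Module ℝ PF]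
    (ρ : VF → PF) (γ : PF → VF) (ηb : PF)
    (br : VF → VF → VF)
    (act : VF → (U → ℝ) → (U → ℝ))
    -- the two Finsler metrics
    (g g' : PF → PF → U → ℝ)
    -- the Cartan connection of (M,L)
    (nab : VF → PF → PF) (K : VF → PF) (β : PF → VF)
    (hK : ∀ X, K X = nab X ηb)
    (hργ : ∀ p, ρ (γ p) = 0)
    (hρβ : ∀ p, ρ (β p) = p)
    (hKγ : ∀ p, K (γ p) = p)
    (hKβ : ∀ p, K (β p) = 0)
    (hdec : ∀ X, β (ρ X) + γ (K X) = X)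
    (hmet : ∀ X p q, act X (g p q) = g (nab X p) q + g p (nab X q))
    (hQ : ∀ p q, nab (β p) (ρ (β q)) - nab (β q) (ρ (β p)) - ρ (br (β p) (β q)) = 0)
    (hTsym : ∀ p q r,
        g (nab (γ p) (ρ (β q)) - nab (β q) (ρ (γ p)) - ρ (br (γ p) (β q))) r
      = g (nab (γ p) (ρ (β r)) - nab (β r) (ρ (γ p)) - ρ (br (γ p) (β r))) q)
    -- the Cartan connection of (M,L̃)
    (nab' : VF → PF → PF) (K' : VF → PF) (β' : PF → VF)
    (hK' : ∀ X, K' X = nab' X ηb)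
    (hρβ' : ∀ p, ρ (β' p) = p)
    (hKγ' : ∀ p, K' (γ p) = p)
    (hKβ' : ∀ p, K' (β' p) = 0)
    (hdec' : ∀ X, β' (ρ X) + γ (K' X) = X)
    (hmet' : ∀ X p q, act X (g' p q) = g' (nab' X p) q + g' p (nab' X q))
    (hQ' : ∀ p q, nab' (β' p) (ρ (β' q)) - nab' (β' q) (ρ (β' p)) - ρ (br (β' p) (β' q)) = 0)
    (hTsym' : ∀ p q r,
        g' (nab' (γ p) (ρ (β' q)) - nab' (β' q) (ρ (γ p)) - ρ (br (γ p) (β' q))) r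
      = g' (nab' (γ p) (ρ (β' r)) - nab' (β' r) (ρ (γ p)) - ρ (br (γ p) (β' r))) q)
    -- the difference tensor ω, and the π-tensors B, N and the vector 1-form ℒ := γ∘N∘ρ
    (ω : VF → PF → PF) (hω : ∀ X p, nab' X p = nab X p + ω X p)
    (Bt : PF → PF → PF) (hBt : ∀ p q, Bt p q = ω (β p) q)
    (N : PF → PF) (hN : ∀ p, N p = Bt p ηb)
    (Lc : VF → VF) (hLc : ∀ X, Lc X = γ (N (ρ X)))
    -- the associated Barthel connections Γ = β∘ρ − γ∘K and Γ̃ = β̃∘ρ − γ∘K̃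
    (Γ Γ' : VF → VF)
    (hΓ : ∀ X, Γ X = β (ρ X) - γ (K X))
    (hΓ' : ∀ X, Γ' X = β' (ρ X) - γ (K' X)) :
    -- Γ̃ = Γ − 2ℒ,  h̃ = h − ℒ,  ṽ = v + ℒ
    (∀ X, Γ' X = Γ X - (2:ℝ) • Lc X) ∧
    (∀ X, β' (ρ X) = β (ρ X) - Lc X) ∧
    (∀ X, γ (K' X) = γ (K X) + Lc X) := by
  have hβ'p : ∀ p, β' p = β p - γ (N p) := by
    intro p
    have h1 := hdec' (β p)
    rw [hρβ] at h1
    have h2 : K' (β p) = N p := by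
      rw [hK', hω, hN, hBt, ← hK, hKβ p, zero_add]
    rw [h2] at h1
    exact eq_sub_of_add_eq h1
  have h2 : ∀ X, β' (ρ X) = β (ρ X) - Lc X := by
    intro X; rw [hβ'p, hLc]
  have h3 : ∀ X, γ (K' X) = γ (K X) + Lc X := by
    intro X
    have a := hdec X
    have b := hdec' X
    rw [h2 X] at b
    have c : γ (K' X) = X - (β (ρ X) - Lc X) :=
      eq_sub_of_add_eq ((add_comm _ _).trans b)
    have d : γ (K X) = X - β (ρ X) :=
      eq_sub_of_add_eq ((add_comm _ _).trans a)
    rw [c, d]; abel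
  refine ⟨fun X => ?_, h2, h3⟩
  rw [hΓ', hΓ, h2, h3]
  module
end

section
/- Let (M,L) and (M,L̃) be conformal Finsler manifolds with g̃ = e^{2σ(x)} g, with Cartan connections ∇, ∇̃ related by ∇̃ = ∇ + ω and B(X̄,Ȳ) := ω(βX̄,Ȳ). A regular curve c in M that is a geodesic of (M,L) (respectively of (M,L̃)) is also a geodesic of (M,L̃) (respectively of (M,L)) if and only if B(ϑ̄,ϑ̄) = 0, where ϑ̄ := η̄|_{ĉ(t)} is the lift of the velocity field along the canonical lift ĉ of c. -/
/-!
STATEMENT 19.  Let (M,L) and (M,L̃) be conformal Finsler manifolds with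
g̃ = e^{2σ(x)} g, Cartan connections ∇̃ = ∇ + ω, and B(X̄,Ȳ) := ω(βX̄,Ȳ).  A regular
curve c in M that is a geodesic of (M,L) (resp. of (M,L̃)) is also a geodesic of
(M,L̃) (resp. of (M,L)) if and only if B(ϑ̄,ϑ̄) = 0, where ϑ̄ = η̄|_{ĉ(t)} is the lift
of the velocity field along the canonical lift ĉ of c.

Abstract model of the along-curve data: `τ t` represents the velocity dĉ/dt of the
canonical lift ĉ at time t (with ρ(dĉ/dt) = ϑ̄, hypothesis `hτ`); `Dt`, `Dt'` are
the covariant derivative operators D/dt, D̃/dt along ĉ associated with ∇ and ∇̃;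
`hrel` is the along-curve form of ∇̃ = ∇ + ω; `hA` expresses A(X̄,η̄) = 0 along ĉ
(A(X̄,Ȳ) := ω(γX̄,Ȳ)); `hsplit` is ω(X,Ȳ) = A(KX,Ȳ) + B(ρX,Ȳ); c is a geodesic
iff (D/dt)ϑ̄ = 0.
-/

theorem statement_19
    {U B VF PF : Type*}
    [AddCommGroup VF] [Module ℝ VF]
    [AddCommGroup PF] [Module ℝ PF]
    (πp : U → B) (σ : B → ℝ)
    (ρ : VF → PF) (γ : PF → VF) (ηb : PF)
    (act : VF → (U → ℝ) → (U → ℝ))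
    (g g' : PF → PF → U → ℝ)
    (hconf : ∀ p q u, g' p q u = Real.exp (2 * σ (πp u)) * g p q u)
    -- the Cartan connections and their difference tensor ω; B(X̄,Ȳ) = ω(βX̄,Ȳ)
    (nab nab' : VF → PF → PF) (K : VF → PF) (β : PF → VF)
    (hK : ∀ X, K X = nab X ηb)
    (ω : VF → PF → PF) (hω : ∀ X p, nab' X p = nab X p + ω X p)
    (Bt : PF → PF → PF) (hBt : ∀ p q, Bt p q = ω (β p) q)
    -- ω(X,Ȳ) = A(KX,Ȳ) + B(ρX,Ȳ)
    (hsplit : ∀ X q, ω X q = ω (γ (K X)) q + ω (β (ρ X)) q)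
    -- the canonical lift ĉ of the regular curve c: velocity τ and lifted velocity ϑ̄
    (τ : ℝ → VF) (ϑ : ℝ → PF)
    (hτ : ∀ t, ρ (τ t) = ϑ t)
    -- A(X̄, η̄) = 0 along ĉ  (ϑ̄ = η̄|_{ĉ(t)})
    (hA : ∀ t (p : PF), ω (γ p) (ϑ t) = 0)
    -- the covariant derivative operators D/dt and D̃/dt along ĉ, related via ω
    (Dt Dt' : (ℝ → PF) → ℝ → PF)
    (hrel : ∀ X t, Dt' X t = Dt X t + ω (τ t) (X t)) :
    -- a geodesic of (M,L) is a geodesic of (M,L̃) iff B(ϑ̄,ϑ̄) = 0, and conversely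
    ((∀ t, Dt ϑ t = 0) → ((∀ t, Dt' ϑ t = 0) ↔ (∀ t, Bt (ϑ t) (ϑ t) = 0))) ∧
    ((∀ t, Dt' ϑ t = 0) → ((∀ t, Dt ϑ t = 0) ↔ (∀ t, Bt (ϑ t) (ϑ t) = 0))) := by
  have key : ∀ t, Dt' ϑ t = Dt ϑ t + Bt (ϑ t) (ϑ t) := by
    intro t
    rw [hrel, hsplit, hA, hBt, hτ, zero_add]
  constructor
  · intro h
    constructor
    · intro h' t; have := key t; rw [h t, h' t, zero_add] at this; exact this.symm
    · intro h' t; rw [key t, h t, h' t, add_zero]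
  · intro h'
    constructor
    · intro h t; have := key t; rw [h t, h' t, zero_add] at this; exact this.symm
    · intro hB t; have := key t; rw [h' t, hB t, add_zero] at this; exact this.symm
end
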